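/- Let B be a Banach A-bimodule and let n ≥ 3 be an odd integer. If B^(n)·A^(n-1) ⊆ B^(n-2), i.e., for all b^(n) ∈ B^(n) and a^(n-1) ∈ A^(n-1) the element b^(n)a^(n-1) ∈ B^(n) lies in B^(n-2), and B^(n-1) has a left unit A^(n-1)-module (an element e^(n-1) ∈ A^(n-1) with e^(n-1)b^(n-1) = b^(n-1) for all b^(n-1) ∈ B^(n-1)), then B is a reflexive Banach space. -/

import Mathlib

open NormedSpace Filter Topology

noncomputable section

universe u

/-- The Arens adjoint of a bounded bilinear map `m : X × Y → Z`:
`⟨adjB m z' x, y⟩ = ⟨z', m x y⟩`.  Its triple iterate `adjB (adjB (adjB m))` is the Arens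
(triple adjoint) extension `m*** : X** × Y** → Z**`. -/
def adjB {X Y Z : Type*} [NormedAddCommGroup X] [NormedSpace ℂ X]
    [NormedAddCommGroup Y] [NormedSpace ℂ Y] [NormedAddCommGroup Z] [NormedSpace ℂ Z]
    (m : X →L[ℂ] Y →L[ℂ] Z) : StrongDual ℂ Z →L[ℂ] X →L[ℂ] StrongDual ℂ Y :=
  ((ContinuousLinearMap.compL ℂ X (Y →L[ℂ] Z) (Y →L[ℂ] ℂ)).flip m).comp
    (ContinuousLinearMap.compL ℂ Y Z ℂ)

/-- A pair consisting of a Banach algebra (carrier `X`, multiplication `mul`) and a Banach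
`X`-bimodule (carrier `Y`, left action `pl`, right action `pr`), recorded through its bounded
(bi)linear structure maps. -/
structure APair : Type (u + 1) where
  X : Type u
  Y : Type u
  [nX : NormedAddCommGroup X]
  [mX : NormedSpace ℂ X]
  [nY : NormedAddCommGroup Y]
  [mY : NormedSpace ℂ Y]
  mul : X →L[ℂ] X →L[ℂ] X
  pl : X →L[ℂ] Y →L[ℂ] Y
  pr : Y →L[ℂ] X →L[ℂ] Y

attribute [instance] APair.nX APair.mX APair.nY APair.mY

/-- Passage to biduals: `X ↦ X**`, `Y ↦ Y**`, with the first Arens product on `X**` and the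
Arens triple-adjoint extensions of the module actions. -/
def APair.bidual (P : APair) : APair where
  X := StrongDual ℂ (StrongDual ℂ P.X)
  Y := StrongDual ℂ (StrongDual ℂ P.Y)
  mul := adjB (adjB (adjB P.mul))
  pl := adjB (adjB (adjB P.pl))
  pr := adjB (adjB (adjB P.pr))

/-- `P.iter k` is the `2k`-th dual level of the pair `P`: the Banach algebra `A^(2k)` acting on
the Banach bimodule `B^(2k)`. -/
def APair.iter (P : APair) : ℕ → APair
  | 0 => P
  | k + 1 => (P.iter k).bidual

variable (A B : Type u) [NonUnitalNormedRing A] [NormedSpace ℂ A]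
  [SMulCommClass ℂ A A] [IsScalarTower ℂ A A] [CompleteSpace A]
  [NormedAddCommGroup B] [NormedSpace ℂ B] [CompleteSpace B]

variable (πl : A →L[ℂ] B →L[ℂ] B) (πr : B →L[ℂ] A →L[ℂ] B)

/-- The base pair: the Banach algebra `A` together with the Banach `A`-bimodule `B`. -/
def basePair : APair where
  X := A
  Y := B
  mul := ContinuousLinearMap.mul ℂ A
  pl := πl
  pr := πr

/-!
For every `b ∈ B^(n)` the left unit gives `b = b·e^(n-1)`, so the hypothesis puts all of
`B^(n) = (B^(n-2))**` into the canonical image of `B^(n-2)`: the space `B^(n-2)` is reflexive.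
Reflexivity passes from the dual `X*` of a Banach space to `X` (a functional on `X**` vanishing on
the closed subspace `X` is evaluation at some `f ∈ X*`, and then `f = 0`), hence from
`B^(2k+2) = (B^(2k))**` to `B^(2k)`, and so down to `B`.
-/

section Reflexivity

variable {𝕜 E : Type*} [RCLike 𝕜] [NormedAddCommGroup E] [NormedSpace 𝕜 E]

lemma Submodule.exists_dual_eq_zero_of_notMem (S : Submodule 𝕜 E) [IsClosed (S : Set E)]
    {x : E} (hx : x ∉ S) : ∃ g : StrongDual 𝕜 E, (∀ s ∈ S, g s = 0) ∧ g x ≠ 0 := by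
  have hx' : S.mkQ x ≠ 0 := fun h0 => hx ((Submodule.Quotient.mk_eq_zero S).mp h0)
  obtain ⟨f, hf⟩ := SeparatingDual.exists_ne_zero (R := 𝕜) hx'
  refine ⟨f.comp S.mkQL, fun s hs => ?_, hf⟩
  simp [(Submodule.Quotient.mk_eq_zero S).mpr hs]

lemma isClosed_range_inclusionInDoubleDual [CompleteSpace E] :
    IsClosed (Set.range (inclusionInDoubleDual 𝕜 E)) :=
  have hiso : Isometry (inclusionInDoubleDual 𝕜 E) := (inclusionInDoubleDualLi 𝕜).isometry
  hiso.isClosedEmbedding.isClosed_range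

lemma surjective_inclusionInDoubleDual_of_dual [CompleteSpace E]
    (h : Function.Surjective (inclusionInDoubleDual 𝕜 (StrongDual 𝕜 E))) :
    Function.Surjective (inclusionInDoubleDual 𝕜 E) := by
  intro x
  by_contra hx
  set S : Submodule 𝕜 (StrongDual 𝕜 (StrongDual 𝕜 E)) :=
    LinearMap.range (inclusionInDoubleDual 𝕜 E).toLinearMap
  have : IsClosed (S : Set (StrongDual 𝕜 (StrongDual 𝕜 E))) := by
    simpa [S, LinearMap.coe_range] using isClosed_range_inclusionInDoubleDual (𝕜 := 𝕜) (E := E)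
  obtain ⟨F, hFS, hFx⟩ := S.exists_dual_eq_zero_of_notMem (𝕜 := 𝕜) (x := x) (by simpa [S] using hx)
  obtain ⟨f, rfl⟩ := h F
  have hf : f = 0 := by
    ext y
    exact hFS _ (LinearMap.mem_range_self _ y)
  simp [hf] at hFx

end Reflexivity

namespace APair

instance completeSpace_iter_Y (P : APair) [CompleteSpace P.Y] : ∀ k, CompleteSpace (P.iter k).Y
  | 0 => ‹CompleteSpace P.Y›
  | k + 1 =>
    haveI := completeSpace_iter_Y P k
    inferInstanceAs (CompleteSpace (StrongDual ℂ (StrongDual ℂ (P.iter k).Y)))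

lemma surjective_inclusionInDoubleDual_of_iter (P : APair) [CompleteSpace P.Y] :
    ∀ k, Function.Surjective (inclusionInDoubleDual ℂ (P.iter k).Y) →
      Function.Surjective (inclusionInDoubleDual ℂ P.Y)
  | 0, h => h
  | k + 1, h =>
    surjective_inclusionInDoubleDual_of_iter P k <|
      surjective_inclusionInDoubleDual_of_dual <| surjective_inclusionInDoubleDual_of_dual h

end APair

/-- With `n = 2j + 3`, the level `(basePair A B πl πr).iter j` carries `A^(n-3)` and `B^(n-3)`:
`h` says `B^(n)·A^(n-1) ⊆ B^(n-2)` and `e` in `hunit` is a left unit of `B^(n-1)`. -/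
theorem stmt11
    (j : ℕ)
    (h : ∀ (b3 : StrongDual ℂ (StrongDual ℂ (StrongDual ℂ ((basePair A B πl πr).iter j).Y)))
        (a2 : StrongDual ℂ (StrongDual ℂ ((basePair A B πl πr).iter j).X)),
      b3.comp (adjB (adjB (adjB ((basePair A B πl πr).iter j).pl)) a2) ∈
        Set.range (inclusionInDoubleDual ℂ (StrongDual ℂ ((basePair A B πl πr).iter j).Y)))
    (hunit : ∃ e : StrongDual ℂ (StrongDual ℂ ((basePair A B πl πr).iter j).X),
      ∀ b2 : StrongDual ℂ (StrongDual ℂ ((basePair A B πl πr).iter j).Y),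
        adjB (adjB (adjB ((basePair A B πl πr).iter j).pl)) e b2 = b2) :
    Function.Surjective (inclusionInDoubleDual ℂ B) := by
  obtain ⟨e, he⟩ := hunit
  have hdual : Function.Surjective
      (inclusionInDoubleDual ℂ (StrongDual ℂ ((basePair A B πl πr).iter j).Y)) := by
    intro b3
    have hb3 : b3.comp (adjB (adjB (adjB ((basePair A B πl πr).iter j).pl)) e) = b3 := by
      ext b2
      rw [ContinuousLinearMap.comp_apply, he b2]
    simpa only [hb3, Set.mem_range] using h b3 e
  have : CompleteSpace (basePair A B πl πr).Y := ‹CompleteSpace B›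
  exact (basePair A B πl πr).surjective_inclusionInDoubleDual_of_iter j
    (surjective_inclusionInDoubleDual_of_dual hdual)

end
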